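/- Let G be the bipartite graph whose parts are A, the set of finite 0-1 sequences, and B, the set of 0-1 sequences of length ω, with a ∈ A adjacent to b ∈ B if and only if a is an initial segment of b. Then G contains no K_{ω,ω} subgraph (any two vertices of B have only finitely many common neighbours), G contains no infinite clique, yet col(G) > ℵ₀. -/

import Mathlib

open Cardinal

universe u v

/-- A well-ordering of the vertices of `G` in which every vertex has
fewer than `μ` neighbours preceding it (a *good* well-ordering for `μ`). -/
def HasGoodOrder {V : Type u} (G : SimpleGraph V) (μ : Cardinal.{u}) : Prop :=
  ∃ r : V → V → Prop, IsWellOrder V r ∧ ∀ v : V, #{w : V | G.Adj v w ∧ r w v} < μ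

/-- The colouring number of `G`: the least cardinal `κ` admitting a
well-ordering of the vertices in which each vertex has fewer than `κ`
earlier neighbours. -/
noncomputable def col {V : Type u} (G : SimpleGraph V) : Cardinal.{u} :=
  sInf {μ : Cardinal.{u} | HasGoodOrder G μ}

/-- `X` is robust (for `μ`): every vertex outside `X` has fewer than `μ`
neighbours inside `X`. -/
def Robust {V : Type u} (G : SimpleGraph V) (μ : Cardinal.{u}) (X : Set V) : Prop :=
  ∀ v ∉ X, #(G.neighborSet v ∩ X : Set V) < μ

/-- `G` contains a `μ`-barricade as a subgraph: disjoint vertex sets `A`, `B`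
with `|A| < |B|` such that every vertex of `B` has at least `μ` neighbours in `A`. -/
def HasBarricade {V : Type u} (G : SimpleGraph V) (μ : Cardinal.{u}) : Prop :=
  ∃ A B : Set V, Disjoint A B ∧ #A < #B ∧
    ∀ b ∈ B, μ ≤ #(G.neighborSet b ∩ A : Set V)

/-- `G` contains a `μ`-obstruction of type I as a subgraph: disjoint sets `A`, `B`
with `|A| = λ ≥ μ`, `|B| = λ⁺`, every vertex of `B` having at least `μ`
neighbours in `A` and every vertex of `A` having `λ⁺` neighbours in `B`. -/
def HasTypeIObstruction {V : Type u} (G : SimpleGraph V) (μ : Cardinal.{u}) : Prop :=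
  ∃ (A B : Set V) (lam : Cardinal.{u}), Disjoint A B ∧ μ ≤ lam ∧
    #A = lam ∧ #B = Order.succ lam ∧
    (∀ b ∈ B, μ ≤ #(G.neighborSet b ∩ A : Set V)) ∧
    (∀ a ∈ A, #(G.neighborSet a ∩ B : Set V) = Order.succ lam)

/-- `G` itself is a `μ`-obstruction of type I: a bipartite graph with
bipartition `(A, B)` satisfying the type I conditions. -/
def IsTypeIObstruction {V : Type u} (G : SimpleGraph V) (μ : Cardinal.{u}) : Prop :=
  ∃ (A B : Set V) (lam : Cardinal.{u}), Disjoint A B ∧ A ∪ B = Set.univ ∧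
    (∀ a b, G.Adj a b → (a ∈ A ∧ b ∈ B) ∨ (a ∈ B ∧ b ∈ A)) ∧
    μ ≤ lam ∧ #A = lam ∧ #B = Order.succ lam ∧
    (∀ b ∈ B, μ ≤ #(G.neighborSet b ∩ A : Set V)) ∧
    (∀ a ∈ A, #(G.neighborSet a ∩ B : Set V) = Order.succ lam)

/-- `C` is closed and unbounded in the ordinal `o`. -/
def IsClubIn (C : Set Ordinal.{v}) (o : Ordinal.{v}) : Prop :=
  (∀ a < o, ∃ b ∈ C, a ≤ b ∧ b < o) ∧
  (∀ a < o, a ≠ 0 → sSup (C ∩ Set.Iio a) = a → a ∈ C)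

/-- `S` is stationary in the ordinal `o`: it meets every club subset of `o`. -/
def IsStationaryIn (S : Set Ordinal.{v}) (o : Ordinal.{v}) : Prop :=
  ∀ C : Set Ordinal.{v}, IsClubIn C o → (S ∩ C ∩ Set.Iio o).Nonempty

/-- The set `T_H` of vertices `α` (ordinals) with `cf α = cf μ`, whose set of
neighbours below `α` has order type `μ` and supremum `α`. -/
noncomputable def typeIITarget (H : SimpleGraph Ordinal.{v}) (μ : Cardinal.{v}) :
    Set Ordinal.{v} :=
  {α | α.cof = μ.ord.cof ∧
    Ordinal.type (Subrel ((· < ·) : Ordinal.{v} → Ordinal.{v} → Prop)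
      (· ∈ H.neighborSet α ∩ Set.Iio α)) = Ordinal.lift.{v + 1} μ.ord ∧
    sSup (H.neighborSet α ∩ Set.Iio α) = α}

/-- `H` is a `μ`-obstruction of type II with vertex set the regular cardinal
`κ > μ` (realised as the ordinals below `κ`): `T_H` is stationary in `κ`. -/
def IsTypeIIObstruction (H : SimpleGraph Ordinal.{v}) (μ κ : Cardinal.{v}) : Prop :=
  μ < κ ∧ κ.IsRegular ∧ (∀ a b, H.Adj a b → a < κ.ord ∧ b < κ.ord) ∧
  IsStationaryIn (typeIITarget H μ) κ.ord

/-- `G` contains a `μ`-obstruction of type II as a subgraph. -/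
def HasTypeIIObstruction {V : Type u} (G : SimpleGraph V) (μ : Cardinal.{v}) : Prop :=
  ∃ (κ : Cardinal.{v}) (H : SimpleGraph Ordinal.{v}) (f : Ordinal.{v} → V),
    Set.InjOn f (Set.Iio κ.ord) ∧ (∀ a b, H.Adj a b → G.Adj (f a) (f b)) ∧
    IsTypeIIObstruction H μ κ

/-- `G` contains a complete subgraph on `μ` vertices. -/
def HasCompleteSubgraph {V : Type u} (G : SimpleGraph V) (μ : Cardinal.{u}) : Prop :=
  ∃ S : Set V, #S = μ ∧ S.Pairwise G.Adj

/-- `G` contains an induced copy of the complete bipartite graph `K_{k,ω}`. -/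
def HasInducedKkOmega {V : Type u} (G : SimpleGraph V) (k : ℕ) : Prop :=
  ∃ A B : Set V, Disjoint A B ∧ #A = (k : Cardinal.{u}) ∧ #B = ℵ₀ ∧
    (∀ a ∈ A, ∀ b ∈ B, G.Adj a b) ∧
    (∀ a ∈ A, ∀ a' ∈ A, a ≠ a' → ¬ G.Adj a a') ∧
    (∀ b ∈ B, ∀ b' ∈ B, b ≠ b' → ¬ G.Adj b b')

/-- Vertices: finite 0-1 sequences together with 0-1 sequences of length `ω`. -/
abbrev BinTreeVert : Type := (List Bool) ⊕ (ℕ → Bool)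

/-- `a` is adjacent to `b` when the finite sequence `a` is an initial segment of
the infinite sequence `b`. -/
def binTreeGraph : SimpleGraph BinTreeVert :=
  SimpleGraph.fromRel (fun x y =>
    match x, y with
    | Sum.inl a, Sum.inr b => ∀ i : Fin a.length, a.get i = b i
    | _, _ => False)

/-!
If every vertex has fewer than `μ` earlier neighbours in some well-ordering, a vertex `b` with at
least `μ` neighbours in `A` has a later neighbour `a ∈ A`, i.e. `b` is one of the fewer than `μ`
earlier neighbours of `a`. For a `μ`-barricade `(A, B)` with `μ ≥ ℵ₀` this gives
`|B| ≤ |A| · μ = |A|`, a contradiction, so `col G > μ`. The binary tree graph is an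
`ℵ₀`-barricade: there are countably many finite sequences, continuum many branches, and each
branch has infinitely many initial segments. It is bipartite, so its cliques are finite, and two
distinct branches have as common neighbours only the initial segments shorter than their first
disagreement, which rules out `K_{ω,ω}`.
-/

open SimpleGraph

section ColouringNumber

variable {V : Type u} {G : SimpleGraph V}

theorem HasGoodOrder.mono {μ ν : Cardinal.{u}} (h : HasGoodOrder G μ) (hμν : μ ≤ ν) :
    HasGoodOrder G ν :=
  let ⟨r, hr, hlt⟩ := h
  ⟨r, hr, fun v => (hlt v).trans_le hμν⟩

theorem hasGoodOrder_col (G : SimpleGraph V) : HasGoodOrder G (col G) :=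
  csInf_mem (s := {μ | HasGoodOrder G μ}) ⟨Order.succ #V, WellOrderingRel, inferInstance,
    fun _ => (mk_subtype_le _).trans_lt (Order.lt_succ _)⟩

theorem lt_col_of_not_hasGoodOrder {μ : Cardinal.{u}} (h : ¬ HasGoodOrder G μ) : μ < col G :=
  not_le.mp fun hle => h ((hasGoodOrder_col G).mono hle)

theorem HasBarricade.not_hasGoodOrder {μ : Cardinal.{u}} (hG : HasBarricade G μ)
    (hμ : ℵ₀ ≤ μ) : ¬ HasGoodOrder G μ := by
  rintro ⟨r, hwo, hr⟩
  obtain ⟨A, B, -, hAB, hB⟩ := hG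
  set earlier : V → Set V := fun v => {w | G.Adj v w ∧ r w v}
  have precedes_neighbour : ∀ b ∈ B, ∃ a ∈ A, b ∈ earlier a := by
    intro b hb
    by_contra! h
    have hsub : G.neighborSet b ∩ A ⊆ earlier b := by
      rintro a ⟨hba, ha⟩
      refine ⟨hba, ?_⟩
      by_contra hab
      have hba' : r b a :=
        by_contra fun h' => G.ne_of_adj hba (hwo.trichotomous a b hab h').symm
      exact h a ha ⟨hba.symm, hba'⟩
    exact (hB b hb).not_gt ((mk_le_mk_of_subset hsub).trans_lt (hr b))
  have hμA : μ ≤ #A := by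
    obtain ⟨b, hb⟩ : B.Nonempty := by
      by_contra hB0
      simp [Set.not_nonempty_iff_eq_empty.mp hB0] at hAB
    exact (hB b hb).trans (mk_le_mk_of_subset Set.inter_subset_right)
  have hBA : #B ≤ #A := calc
    #B ≤ #(⋃ a ∈ A, earlier a) := mk_le_mk_of_subset fun b hb => by
      simpa only [Set.mem_iUnion₂, exists_prop] using precedes_neighbour b hb
    _ ≤ #A * ⨆ a : A, #(earlier a) := mk_biUnion_le _ _
    _ ≤ #A * #A := by gcongr; exact ciSup_le' fun a => (hr a).le.trans hμA
    _ = #A := mul_eq_self (hμ.trans hμA)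
  exact hAB.not_ge hBA

theorem SimpleGraph.Coloring.finite_of_pairwise_adj {α : Type*} [Finite α] (C : G.Coloring α)
    {S : Set V} (hS : S.Pairwise G.Adj) : S.Finite :=
  Set.finite_coe_iff.mp <| Finite.of_injective _ <|
    C.injective_comp_of_pairwise_adj ((↑) : S → V) fun x y hxy =>
      hS x.2 y.2 (Subtype.coe_ne_coe.mpr hxy)

end ColouringNumber

section BinaryTree

def seqPrefix (b : ℕ → Bool) (n : ℕ) : List Bool := List.ofFn fun i : Fin n => b i

@[simp]
theorem binTreeGraph_adj_inl_inr {a : List Bool} {b : ℕ → Bool} :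
    binTreeGraph.Adj (.inl a) (.inr b) ↔ ∀ i : Fin a.length, a.get i = b i := by
  simp [binTreeGraph]

@[simp]
theorem binTreeGraph_not_adj_inl_inl (a a' : List Bool) :
    ¬ binTreeGraph.Adj (.inl a) (.inl a') := by
  simp [binTreeGraph]

@[simp]
theorem binTreeGraph_not_adj_inr_inr (b b' : ℕ → Bool) :
    ¬ binTreeGraph.Adj (.inr b) (.inr b') := by
  simp [binTreeGraph]

theorem binTreeGraph_adj_seqPrefix (b : ℕ → Bool) (n : ℕ) :
    binTreeGraph.Adj (.inl (seqPrefix b n)) (.inr b) := by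
  simp [seqPrefix]

def binTreeColoring : binTreeGraph.Coloring Bool :=
  Coloring.mk Sum.isLeft fun {x y} h => by
    rcases x with _ | _ <;> rcases y with _ | _ <;> simp_all

theorem binTreeGraph_mem_range_inr_of_adj {a : List Bool} {w : BinTreeVert}
    (h : binTreeGraph.Adj (.inl a) w) : w ∈ Set.range Sum.inr := by
  rcases w with _ | b
  · simp at h
  · exact ⟨b, rfl⟩

theorem binTreeGraph_commonNeighbors_inr_finite {f g : ℕ → Bool} (hfg : f ≠ g) :
    (binTreeGraph.commonNeighbors (.inr f) (.inr g)).Finite := by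
  obtain ⟨n, hn⟩ := Function.ne_iff.mp hfg
  refine ((List.finite_length_le Bool n).image Sum.inl).subset ?_
  rintro (a | b) h
  · rw [mem_commonNeighbors, adj_comm, binTreeGraph_adj_inl_inr, adj_comm,
      binTreeGraph_adj_inl_inr] at h
    refine ⟨a, show a.length ≤ n from ?_, rfl⟩
    by_contra! hlen
    exact hn ((h.1 ⟨n, hlen⟩).symm.trans (h.2 ⟨n, hlen⟩))
  · exact absurd h.1 (binTreeGraph_not_adj_inr_inr _ _)

theorem binTreeGraph_not_forall_adj_of_infinite {A B : Set BinTreeVert} (hA : A.Infinite)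
    (hB : B.Infinite) : ¬ ∀ a ∈ A, ∀ b ∈ B, binTreeGraph.Adj a b := by
  intro hAB
  wlog hAr : A ⊆ Set.range Sum.inr generalizing A B
  -- a finite sequence in `A` forces `B` to consist of branches, so swap `A` and `B`
  · obtain ⟨x, hxA, hx⟩ := Set.not_subset.mp hAr
    obtain ⟨a, rfl⟩ : ∃ a, x = .inl a := by
      rcases x with a | b
      · exact ⟨a, rfl⟩
      · exact absurd ⟨b, rfl⟩ hx
    exact this hB hA (fun b hb a ha => (hAB a ha b hb).symm)
      fun b hb => binTreeGraph_mem_range_inr_of_adj (hAB _ hxA b hb)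
  obtain ⟨x, hx, y, hy, hxy⟩ := hA.nontrivial
  obtain ⟨f, rfl⟩ := hAr hx
  obtain ⟨g, rfl⟩ := hAr hy
  have hfg : f ≠ g := fun h => hxy (congrArg Sum.inr h)
  exact hB ((binTreeGraph_commonNeighbors_inr_finite hfg).subset
    fun b hb => ⟨hAB _ hx b hb, hAB _ hy b hb⟩)

theorem binTreeGraph_hasBarricade : HasBarricade binTreeGraph ℵ₀ := by
  refine ⟨Set.range Sum.inl, Set.range Sum.inr, Set.isCompl_range_inl_range_inr.disjoint, ?_,
    ?_⟩
  · rw [mk_range_eq _ Sum.inl_injective, mk_range_eq _ Sum.inr_injective, mk_list_eq_aleph0,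
      mk_arrow]
    simpa using aleph0_lt_continuum
  · rintro _ ⟨b, rfl⟩
    refine aleph0_le_mk_iff.mpr (Set.Infinite.to_subtype ?_)
    refine Set.infinite_of_injective_forall_mem (f := fun n => .inl (seqPrefix b n)) ?_ ?_
    · intro m n hmn
      simpa [seqPrefix] using congrArg List.length (Sum.inl_injective hmn)
    · exact fun n => ⟨(binTreeGraph_adj_seqPrefix b n).symm, seqPrefix b n, rfl⟩

end BinaryTree

/-- the binary tree graph contains no `K_{ω,ω}` subgraph and no
countably infinite clique, yet has colouring number `> ℵ₀`. -/
theorem stmt16 :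
    (¬ ∃ A B : Set BinTreeVert, Disjoint A B ∧ #A = ℵ₀ ∧ #B = ℵ₀ ∧
        ∀ a ∈ A, ∀ b ∈ B, binTreeGraph.Adj a b) ∧
    (¬ ∃ S : Set BinTreeVert, #S = ℵ₀ ∧ S.Pairwise binTreeGraph.Adj) ∧
    ℵ₀ < col binTreeGraph := by
  have infinite_of_mk_eq {S : Set BinTreeVert} (h : #S = ℵ₀) : S.Infinite :=
    Set.infinite_coe_iff.mp (Cardinal.infinite_iff.mpr h.ge)
  refine ⟨?_, ?_, ?_⟩
  · rintro ⟨A, B, -, hA, hB, hAB⟩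
    exact binTreeGraph_not_forall_adj_of_infinite (infinite_of_mk_eq hA) (infinite_of_mk_eq hB) hAB
  · rintro ⟨S, hS, hclique⟩
    exact infinite_of_mk_eq hS (binTreeColoring.finite_of_pairwise_adj hclique)
  · exact lt_col_of_not_hasGoodOrder (binTreeGraph_hasBarricade.not_hasGoodOrder le_rfl)
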